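/- arXiv:2507.22054 — 3 statements merged into one kernel-verified Lean document; each statement's English description precedes it below -/
import Mathlib

section
/- Let I be a finite set, let P₀ and P'₀ be probability distributions on I, and let N be a positive integer. Given N i.i.d. samples drawn either all from P₀ or all from P'₀ (each alternative with prior probability 1/2), for every decision rule T : I^N → Bool the success probability (1/2)·∑_{s ∈ I^N : T(s)=false} P₀^⊗N(s) + (1/2)·∑_{s ∈ I^N : T(s)=true} P'₀^⊗N(s) is at most 1/2 + (N/4)·‖P₀ − P'₀‖₁. -/
open Finset

lemma sum_prod_fn_eq_pow {I : Type*} [Fintype I] (f : I → ℝ) :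
    ∀ N : ℕ, ∑ s : Fin N → I, ∏ j, f (s j) = (∑ x, f x) ^ N := by
  intro N
  induction N with
  | zero => simp
  | succ n ih =>
    have he : ∑ s : Fin (n+1) → I, ∏ j, f (s j)
        = ∑ p : I × (Fin n → I), f p.1 * ∏ j, f (p.2 j) :=
      (Fintype.sum_equiv (Fin.consEquiv (fun _ : Fin (n+1) => I)) _ _
        (fun p => by simp [Fin.consEquiv, Fin.prod_univ_succ])).symm
    rw [he, Fintype.sum_prod_type]
    simp_rw [← Finset.mul_sum]
    rw [← Finset.sum_mul, ih, pow_succ, mul_comm]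

lemma l1_prod_le {I : Type*} [Fintype I] (P Q : I → ℝ)
    (hP : ∀ s, 0 ≤ P s) (hQ : ∀ s, 0 ≤ Q s)
    (hPs : ∑ s, P s = 1) (hQs : ∑ s, Q s = 1) :
    ∀ N : ℕ, ∑ s : Fin N → I, |(∏ j, P (s j)) - ∏ j, Q (s j)|
      ≤ N * ∑ x, |P x - Q x| := by
  intro N
  induction N with
  | zero => simp
  | succ n ih =>
    have he : ∑ s : Fin (n+1) → I, |(∏ j, P (s j)) - ∏ j, Q (s j)|
        = ∑ p : I × (Fin n → I), |P p.1 * ∏ j, P (p.2 j) - Q p.1 * ∏ j, Q (p.2 j)| :=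
      (Fintype.sum_equiv (Fin.consEquiv (fun _ : Fin (n+1) => I)) _ _
        (fun p => by simp [Fin.consEquiv, Fin.prod_univ_succ])).symm
    rw [he]
    calc ∑ p : I × (Fin n → I), |P p.1 * ∏ j, P (p.2 j) - Q p.1 * ∏ j, Q (p.2 j)|
          ≤ ∑ p : I × (Fin n → I),
            (P p.1 * |(∏ j, P (p.2 j)) - ∏ j, Q (p.2 j)| + |P p.1 - Q p.1| * ∏ j, Q (p.2 j)) := by
            apply Finset.sum_le_sum
            intro p _
            have h : P p.1 * ∏ j, P (p.2 j) - Q p.1 * ∏ j, Q (p.2 j)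
                = P p.1 * ((∏ j, P (p.2 j)) - ∏ j, Q (p.2 j)) + (P p.1 - Q p.1) * ∏ j, Q (p.2 j) := by
              ring
            rw [h]
            refine (abs_add_le _ _).trans ?_
            rw [abs_mul, abs_mul, abs_of_nonneg (hP p.1),
              abs_of_nonneg (Finset.prod_nonneg fun j _ => hQ _)]
        _ = (∑ x, P x) * (∑ t : Fin n → I, |(∏ j, P (t j)) - ∏ j, Q (t j)|)
            + (∑ x, |P x - Q x|) * (∑ t : Fin n → I, ∏ j, Q (t j)) := by
            rw [Fintype.sum_prod_type, Finset.sum_mul, Finset.sum_mul]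
            rw [← Finset.sum_add_distrib]
            congr 1
            ext x
            simp [Finset.mul_sum, Finset.sum_add_distrib]
        _ ≤ n * (∑ x, |P x - Q x|) + (∑ x, |P x - Q x|) * 1 := by
            rw [hPs, one_mul, sum_prod_fn_eq_pow, hQs, one_pow]
            exact add_le_add ih le_rfl
        _ = (n + 1 : ℕ) * ∑ x, |P x - Q x| := by push_cast; ring

/-- (Proposition on many-sample hypothesis testing.) Given `N` i.i.d.
samples drawn either all from `P₀` or all from `P'₀` (each with prior probability `1/2`),
every decision rule `T : I^N → Bool` has success probability at most
`1/2 + (N/4)·‖P₀ − P'₀‖₁`. -/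
theorem many_sample_success_prob_le
    {I : Type*} [Fintype I] (P₀ P'₀ : I → ℝ) {N : ℕ} (hN : 0 < N)
    (hPpos : ∀ s, 0 ≤ P₀ s) (hPsum : ∑ s, P₀ s = 1)
    (hP'pos : ∀ s, 0 ≤ P'₀ s) (hP'sum : ∑ s, P'₀ s = 1)
    (T : (Fin N → I) → Bool) :
    (1/2) * ∑ s ∈ univ.filter (fun s : Fin N → I => T s = false), ∏ j, P₀ (s j)
      + (1/2) * ∑ s ∈ univ.filter (fun s : Fin N → I => T s = true), ∏ j, P'₀ (s j)
      ≤ 1/2 + (N/4) * ∑ x, |P₀ x - P'₀ x| := by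
  set P : (Fin N → I) → ℝ := fun s => ∏ j, P₀ (s j) with hPdef
  set Q : (Fin N → I) → ℝ := fun s => ∏ j, P'₀ (s j) with hQdef
  have hPtot : ∑ s : Fin N → I, P s = 1 := by
    rw [hPdef]; rw [sum_prod_fn_eq_pow, hPsum, one_pow]
  have hQtot : ∑ s : Fin N → I, Q s = 1 := by
    rw [hQdef]; rw [sum_prod_fn_eq_pow, hP'sum, one_pow]
  have hsplit : ∑ s ∈ univ.filter (fun s : Fin N → I => T s = false), P s
      = 1 - ∑ s ∈ univ.filter (fun s : Fin N → I => T s = true), P s := by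
    have := Finset.sum_filter_add_sum_filter_not univ (fun s : Fin N → I => T s = true) P
    rw [hPtot] at this
    have hfe : univ.filter (fun s : Fin N → I => ¬ T s = true)
        = univ.filter (fun s : Fin N → I => T s = false) := by
      apply Finset.filter_congr; intro s _; simp
    rw [hfe] at this
    linarith
  have key : ∑ s ∈ univ.filter (fun s : Fin N → I => T s = true), (Q s - P s)
      ≤ (1/2) * ∑ s : Fin N → I, |P s - Q s| := by
    calc ∑ s ∈ univ.filter (fun s : Fin N → I => T s = true), (Q s - P s)
        ≤ ∑ s ∈ univ.filter (fun s : Fin N → I => T s = true), (|P s - Q s| + (Q s - P s)) / 2 := by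
          apply Finset.sum_le_sum; intro s _
          have h1 : Q s - P s ≤ |P s - Q s| := by
            rw [abs_sub_comm]; exact le_abs_self _
          linarith
      _ ≤ ∑ s : Fin N → I, (|P s - Q s| + (Q s - P s)) / 2 := by
          apply Finset.sum_le_sum_of_subset_of_nonneg (Finset.filter_subset _ _)
          intro s _ _
          have h2 : P s - Q s ≤ |P s - Q s| := le_abs_self _
          linarith
      _ = (1/2) * ∑ s : Fin N → I, |P s - Q s| := by
          rw [← Finset.sum_div, Finset.sum_add_distrib, Finset.sum_sub_distrib,
            hPtot, hQtot]
          ring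
  have hl1 : ∑ s : Fin N → I, |P s - Q s| ≤ N * ∑ x, |P₀ x - P'₀ x| :=
    l1_prod_le P₀ P'₀ hPpos hP'pos hPsum hP'sum N
  have hB : ∑ s ∈ univ.filter (fun s : Fin N → I => T s = true), (Q s - P s)
      = (∑ s ∈ univ.filter (fun s : Fin N → I => T s = true), Q s)
        - ∑ s ∈ univ.filter (fun s : Fin N → I => T s = true), P s := by
    rw [Finset.sum_sub_distrib]
  rw [hsplit]
  nlinarith [key, hl1, hB]
end

section
/- Let (Ω, μ) be a probability space, let m and N be positive integers, and let β > 0. For each α ∈ Ω let P_α = (p₁(α), …, p_m(α)) be a probability vector on the m-element outcome set {1,…,m}, with each p_k : Ω → ℝ measurable, and let P_fixed = (μ₁, …, μ_m) be a fixed probability vector. Suppose that for every k ∈ {1,…,m} and every δ > 0 one has μ({α : |p_k(α) − μ_k| ≥ δ}) ≤ β/δ². Then with probability at least 1 − m·√β over the draw of α from μ, the following holds: for every decision rule T : {1,…,m}^N → Bool distinguishing N i.i.d. samples drawn from P_α from N i.i.d. samples drawn from P_fixed (each alternative with prior probability 1/2), the success probability (1/2)·P_α^⊗N({T = false}) + (1/2)·P_fixed^⊗N({T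 = true}) is at most 1/2 + (N·m·β^{1/4})/4. -/
open MeasureTheory Finset

lemma sum_cons_decomp {m n : ℕ} (F : (Fin (n+1) → Fin m) → ℝ) :
    ∑ s : Fin (n+1) → Fin m, F s = ∑ x : Fin m, ∑ s : Fin n → Fin m, F (Fin.cons x s) := by
  rw [← (Fin.consEquiv (fun _ => Fin m)).sum_comp F, Fintype.sum_prod_type]
  rfl

lemma sum_prod_fun {m : ℕ} (N : ℕ) (f : Fin m → ℝ) :
    ∑ s : Fin N → Fin m, ∏ j, f (s j) = (∑ k, f k) ^ N := by
  induction N with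
  | zero => simp
  | succ n ih =>
    rw [sum_cons_decomp]
    simp only [Fin.prod_univ_succ, Fin.cons_zero, Fin.cons_succ]
    rw [← Finset.sum_mul_sum, ih, pow_succ]
    ring

lemma sum_abs_prod_sub {m : ℕ} (p c : Fin m → ℝ) (hp : ∀ k, 0 ≤ p k) (hc : ∀ k, 0 ≤ c k)
    (hps : ∑ k, p k = 1) (hcs : ∑ k, c k = 1) (N : ℕ) :
    ∑ s : Fin N → Fin m, |(∏ j, p (s j)) - ∏ j, c (s j)| ≤ N * ∑ k, |p k - c k| := by
  induction N with
  | zero => simp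
  | succ n ih =>
    rw [sum_cons_decomp]
    simp only [Fin.prod_univ_succ, Fin.cons_zero, Fin.cons_succ]
    have key : ∀ x : Fin m, ∀ s : Fin n → Fin m,
        |p x * ∏ j, p (s j) - c x * ∏ j, c (s j)|
          ≤ p x * |(∏ j, p (s j)) - ∏ j, c (s j)| + |p x - c x| * ∏ j, c (s j) := by
      intro x s
      have h1 : 0 ≤ ∏ j, c (s j) := Finset.prod_nonneg fun j _ => hc _
      have := abs_add_le (p x * ((∏ j, p (s j)) - ∏ j, c (s j))) ((p x - c x) * ∏ j, c (s j))
      calc |p x * ∏ j, p (s j) - c x * ∏ j, c (s j)|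
          = |p x * ((∏ j, p (s j)) - ∏ j, c (s j)) + (p x - c x) * ∏ j, c (s j)| := by ring_nf
        _ ≤ |p x * ((∏ j, p (s j)) - ∏ j, c (s j))| + |(p x - c x) * ∏ j, c (s j)| := this
        _ = p x * |(∏ j, p (s j)) - ∏ j, c (s j)| + |p x - c x| * ∏ j, c (s j) := by
            rw [abs_mul, abs_mul, abs_of_nonneg (hp x), abs_of_nonneg h1]
    calc ∑ x : Fin m, ∑ s : Fin n → Fin m, |p x * ∏ j, p (s j) - c x * ∏ j, c (s j)|
        ≤ ∑ x : Fin m, ∑ s : Fin n → Fin m,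
            (p x * |(∏ j, p (s j)) - ∏ j, c (s j)| + |p x - c x| * ∏ j, c (s j)) :=
          Finset.sum_le_sum fun x _ => Finset.sum_le_sum fun s _ => key x s
      _ = (∑ x, p x) * (∑ s : Fin n → Fin m, |(∏ j, p (s j)) - ∏ j, c (s j)|)
            + (∑ x, |p x - c x|) * (∑ s : Fin n → Fin m, ∏ j, c (s j)) := by
          simp only [Finset.sum_add_distrib, ← Finset.mul_sum, ← Finset.sum_mul]
      _ ≤ 1 * (n * ∑ k, |p k - c k|) + (∑ x, |p x - c x|) * 1 := by
          rw [hps, sum_prod_fun, hcs, one_pow]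
          have h2 : 0 ≤ ∑ x, |p x - c x| := Finset.sum_nonneg fun x _ => abs_nonneg _
          nlinarith [ih]
      _ = (n + 1 : ℕ) * ∑ k, |p k - c k| := by push_cast; ring

lemma success_bound {m N : ℕ} (p c : Fin m → ℝ) (hp : ∀ k, 0 ≤ p k) (hc : ∀ k, 0 ≤ c k)
    (hps : ∑ k, p k = 1) (hcs : ∑ k, c k = 1) (ε : ℝ)
    (hd : ∑ k, |p k - c k| ≤ ε) (T : (Fin N → Fin m) → Bool) :
    (1/2) * ∑ s ∈ univ.filter (fun s : Fin N → Fin m => T s = false), ∏ j, p (s j)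
      + (1/2) * ∑ s ∈ univ.filter (fun s : Fin N → Fin m => T s = true), ∏ j, c (s j)
      ≤ 1/2 + (N * ε) / 4 := by
  set P : (Fin N → Fin m) → ℝ := fun s => ∏ j, p (s j) with hP
  set C : (Fin N → Fin m) → ℝ := fun s => ∏ j, c (s j) with hC
  have hfilter : univ.filter (fun s : Fin N → Fin m => T s = false)
      = univ.filter (fun s : Fin N → Fin m => ¬ (T s = true)) := by
    ext s; simp
  have htotP : ∑ s ∈ univ.filter (fun s : Fin N → Fin m => T s = true), P s
      + ∑ s ∈ univ.filter (fun s : Fin N → Fin m => ¬ (T s = true)), P s = 1 := by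
    rw [Finset.sum_filter_add_sum_filter_not]
    rw [show ∑ s ∈ univ, P s = (∑ k, p k) ^ N from sum_prod_fun N p, hps, one_pow]
  have htotC : ∑ s ∈ univ.filter (fun s : Fin N → Fin m => T s = true), C s
      + ∑ s ∈ univ.filter (fun s : Fin N → Fin m => ¬ (T s = true)), C s = 1 := by
    rw [Finset.sum_filter_add_sum_filter_not]
    rw [show ∑ s ∈ univ, C s = (∑ k, c k) ^ N from sum_prod_fun N c, hcs, one_pow]
  have habs : ∑ s ∈ univ.filter (fun s : Fin N → Fin m => T s = true), |C s - P s|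
      + ∑ s ∈ univ.filter (fun s : Fin N → Fin m => ¬ (T s = true)), |C s - P s|
      ≤ N * ε := by
    rw [Finset.sum_filter_add_sum_filter_not]
    have h1 : ∑ s ∈ univ, |C s - P s| = ∑ s : Fin N → Fin m, |(∏ j, p (s j)) - ∏ j, c (s j)| := by
      apply Finset.sum_congr rfl; intro s _; rw [abs_sub_comm]
    rw [h1]
    calc _ ≤ (N : ℝ) * ∑ k, |p k - c k| := sum_abs_prod_sub p c hp hc hps hcs N
      _ ≤ N * ε := by
        have : (0:ℝ) ≤ N := Nat.cast_nonneg N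
        nlinarith
  have hA : ∑ s ∈ univ.filter (fun s : Fin N → Fin m => T s = true), (C s - P s)
      ≤ ∑ s ∈ univ.filter (fun s : Fin N → Fin m => T s = true), |C s - P s| :=
    Finset.sum_le_sum fun s _ => le_abs_self _
  have hB : ∑ s ∈ univ.filter (fun s : Fin N → Fin m => ¬ (T s = true)), (P s - C s)
      ≤ ∑ s ∈ univ.filter (fun s : Fin N → Fin m => ¬ (T s = true)), |C s - P s| :=
    Finset.sum_le_sum fun s _ => by rw [abs_sub_comm]; exact le_abs_self _
  have hsub1 : ∑ s ∈ univ.filter (fun s : Fin N → Fin m => T s = true), (C s - P s)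
      = (∑ s ∈ univ.filter (fun s : Fin N → Fin m => T s = true), C s)
        - ∑ s ∈ univ.filter (fun s : Fin N → Fin m => T s = true), P s :=
    Finset.sum_sub_distrib _ _
  have hsub2 : ∑ s ∈ univ.filter (fun s : Fin N → Fin m => ¬ (T s = true)), (P s - C s)
      = (∑ s ∈ univ.filter (fun s : Fin N → Fin m => ¬ (T s = true)), P s)
        - ∑ s ∈ univ.filter (fun s : Fin N → Fin m => ¬ (T s = true)), C s :=
    Finset.sum_sub_distrib _ _
  rw [hfilter]
  linarith

/-- (Formal version of Theorem 1: indistinguishability from probability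
concentration.) If the POVM outcome probabilities `p_k(α)` concentrate around the fixed
probability vector `(μ₁,…,μ_m)` with constant `β`, then with probability at least
`1 − m·√β` over the draw of `α`, every decision rule `T` on `N` i.i.d. samples has
success probability at most `1/2 + N·m·β^{1/4}/4`. -/
theorem indistinguishability_from_concentration
    {Ω : Type*} [MeasurableSpace Ω] (μ : Measure Ω) [IsProbabilityMeasure μ]
    {m N : ℕ} (hm : 0 < m) (hN : 0 < N) (β : ℝ) (hβ : 0 < β)
    (p : Fin m → Ω → ℝ) (hmeas : ∀ k, Measurable (p k))
    (hppos : ∀ α k, 0 ≤ p k α) (hpsum : ∀ α, ∑ k, p k α = 1)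
    (c : Fin m → ℝ) (hcpos : ∀ k, 0 ≤ c k) (hcsum : ∑ k, c k = 1)
    (hconc : ∀ k, ∀ δ > 0, μ {α | δ ≤ |p k α - c k|} ≤ ENNReal.ofReal (β / δ ^ 2)) :
    ENNReal.ofReal (1 - m * Real.sqrt β)
      ≤ μ {α | ∀ T : (Fin N → Fin m) → Bool,
            (1/2) * ∑ s ∈ univ.filter (fun s : Fin N → Fin m => T s = false), ∏ j, p (s j) α
              + (1/2) * ∑ s ∈ univ.filter (fun s : Fin N → Fin m => T s = true), ∏ j, c (s j)
              ≤ 1/2 + (N * m * β ^ ((1:ℝ)/4)) / 4} := by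
  set δ : ℝ := β ^ ((1:ℝ)/4) with hδdef
  have hδpos : 0 < δ := Real.rpow_pos_of_pos hβ _
  -- β / δ² = √β
  have hδsq : δ ^ 2 = Real.sqrt β := by
    rw [hδdef, ← Real.rpow_natCast (β ^ ((1:ℝ)/4)) 2, ← Real.rpow_mul hβ.le,
      Real.sqrt_eq_rpow]
    norm_num
  have hdiv : β / δ ^ 2 = Real.sqrt β := by
    rw [hδsq, div_eq_iff (ne_of_gt (Real.sqrt_pos.2 hβ)), Real.mul_self_sqrt hβ.le]
  -- good set
  set G : Set Ω := {α | ∀ k, |p k α - c k| < δ} with hG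
  have hsubset : G ⊆ {α | ∀ T : (Fin N → Fin m) → Bool,
      (1/2) * ∑ s ∈ univ.filter (fun s : Fin N → Fin m => T s = false), ∏ j, p (s j) α
        + (1/2) * ∑ s ∈ univ.filter (fun s : Fin N → Fin m => T s = true), ∏ j, c (s j)
        ≤ 1/2 + (N * m * β ^ ((1:ℝ)/4)) / 4} := by
    intro α hα T
    have hd : ∑ k, |p k α - c k| ≤ m * δ := by
      calc ∑ k, |p k α - c k| ≤ ∑ _k : Fin m, δ :=
            Finset.sum_le_sum fun k _ => (hα k).le
        _ = m * δ := by simp [mul_comm]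
    have := success_bound (fun k => p k α) c (hppos α) hcpos (hpsum α) hcsum (m * δ) hd T
    calc _ ≤ 1/2 + ((N : ℝ) * (m * δ)) / 4 := this
      _ = 1/2 + (N * m * β ^ ((1:ℝ)/4)) / 4 := by rw [hδdef]; ring_nf
  refine le_trans ?_ (measure_mono hsubset)
  -- complement bound
  have hGc : Gᶜ ⊆ ⋃ k : Fin m, {α | δ ≤ |p k α - c k|} := by
    intro α hα
    simp only [hG, Set.mem_compl_iff, Set.mem_setOf_eq, not_forall, not_lt] at hα
    obtain ⟨k, hk⟩ := hα
    exact Set.mem_iUnion.2 ⟨k, hk⟩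
  have hGcle : μ Gᶜ ≤ ENNReal.ofReal (m * Real.sqrt β) := by
    calc μ Gᶜ ≤ ∑ k : Fin m, μ {α | δ ≤ |p k α - c k|} :=
          (measure_mono hGc).trans (measure_iUnion_fintype_le μ _)
      _ ≤ ∑ _k : Fin m, ENNReal.ofReal (Real.sqrt β) :=
          Finset.sum_le_sum fun k _ => by
            simpa [hdiv] using hconc k δ hδpos
      _ = ENNReal.ofReal (m * Real.sqrt β) := by
          rw [Finset.sum_const, Finset.card_univ, Fintype.card_fin, nsmul_eq_mul,
            ENNReal.ofReal_mul (by positivity : (0:ℝ) ≤ (m:ℝ))]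
          simp
  have h1 : (1 : ENNReal) ≤ μ G + μ Gᶜ := by
    have := measure_union_le (μ := μ) G Gᶜ
    rwa [Set.union_compl_self, measure_univ] at this
  have h2 : ENNReal.ofReal (1 - m * Real.sqrt β)
      ≤ 1 - ENNReal.ofReal (m * Real.sqrt β) := by
    rw [ENNReal.ofReal_sub _ (by positivity)]
    simp
  refine h2.trans ?_
  refine le_trans (tsub_le_tsub_left hGcle 1) ?_
  exact tsub_le_iff_right.2 h1
end

section
/- Let M be an even positive integer with M ≥ 2 and let N be a positive integer. Define the probability distribution Q on {1, 2, …, M} by Q(i) = 1/M + 1/M² when i is odd and Q(i) = 1/M − 1/M² when i is even, and let U be the uniform distribution on {1,…,M}. Then ‖Q − U‖₁ = 1/M, and consequently, given N i.i.d. samples drawn either all from Q or all from U (each alternative with prior probability 1/2), every decision rule T : {1,…,M}^N → Bool has success probability (1/2)·Q^⊗N({T = false}) + (1/2)·U^⊗N({T = true}) at most 1/2 + N/(4M). -/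
open Finset

lemma sum_pi_succ {α : Type*} [Fintype α] (n : ℕ) (F : (Fin (n+1) → α) → ℝ) :
    ∑ s : Fin (n+1) → α, F s = ∑ a : α, ∑ s : Fin n → α, F (Fin.cons a s) := by
  rw [← (Fin.consEquiv fun _ : Fin (n+1) => α).sum_comp F, Fintype.sum_prod_type]
  rfl

lemma sum_prod_one {α : Type*} [Fintype α] {q : α → ℝ} (h : ∑ a, q a = 1) :
    ∀ n, ∑ s : Fin n → α, ∏ j, q (s j) = 1 := by
  intro n
  induction n with
  | zero => simp
  | succ n ih =>
    rw [sum_pi_succ]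
    simp only [Fin.prod_univ_succ, Fin.cons_zero, Fin.cons_succ, ← Finset.mul_sum, ih,
      mul_one, h]

lemma l1_prod_le_s14 {α : Type*} [Fintype α] {q u : α → ℝ} (hq0 : ∀ a, 0 ≤ q a)
    (hu0 : ∀ a, 0 ≤ u a) (hq : ∑ a, q a = 1) (hu : ∑ a, u a = 1) :
    ∀ n : ℕ, ∑ s : Fin n → α, |(∏ j, q (s j)) - ∏ j, u (s j)| ≤ n * ∑ a, |q a - u a| := by
  intro n
  induction n with
  | zero => simp
  | succ n ih =>
    rw [sum_pi_succ]
    simp only [Fin.prod_univ_succ, Fin.cons_zero, Fin.cons_succ]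
    have key : ∀ (a : α) (s : Fin n → α),
        |q a * ∏ j, q (s j) - u a * ∏ j, u (s j)| ≤
          |q a - u a| * ∏ j, q (s j) + u a * |(∏ j, q (s j)) - ∏ j, u (s j)| := by
      intro a s
      have hP : (0:ℝ) ≤ ∏ j, q (s j) := Finset.prod_nonneg fun j _ => hq0 _
      calc |q a * ∏ j, q (s j) - u a * ∏ j, u (s j)|
          = |(q a - u a) * ∏ j, q (s j) + u a * ((∏ j, q (s j)) - ∏ j, u (s j))| := by
            ring_nf
        _ ≤ |(q a - u a) * ∏ j, q (s j)| + |u a * ((∏ j, q (s j)) - ∏ j, u (s j))| :=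
            abs_add_le _ _
        _ = |q a - u a| * ∏ j, q (s j) + u a * |(∏ j, q (s j)) - ∏ j, u (s j)| := by
            rw [abs_mul, abs_mul, abs_of_nonneg hP, abs_of_nonneg (hu0 a)]
    calc ∑ a : α, ∑ s : Fin n → α, |q a * ∏ j, q (s j) - u a * ∏ j, u (s j)|
        ≤ ∑ a : α, ∑ s : Fin n → α,
            (|q a - u a| * ∏ j, q (s j) + u a * |(∏ j, q (s j)) - ∏ j, u (s j)|) :=
          Finset.sum_le_sum fun a _ => Finset.sum_le_sum fun s _ => key a s
      _ = (∑ a, |q a - u a|) * (∑ s : Fin n → α, ∏ j, q (s j))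
            + (∑ a, u a) * (∑ s : Fin n → α, |(∏ j, q (s j)) - ∏ j, u (s j)|) := by
          simp only [Finset.sum_add_distrib, ← Finset.mul_sum]
          rw [← Finset.sum_mul, ← Finset.sum_mul]
      _ ≤ (∑ a, |q a - u a|) * 1 + 1 * (n * ∑ a, |q a - u a|) := by
          rw [sum_prod_one hq, hu, one_mul, mul_one]
          have : (0:ℝ) ≤ ∑ a, |q a - u a| := Finset.sum_nonneg fun a _ => abs_nonneg _
          nlinarith [ih]
      _ = (↑(n+1)) * ∑ a, |q a - u a| := by push_cast; ring

/-- (Indistinguishable example.) Outcomes in `{1,…,M}` are encoded as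
`i : Fin M` representing the value `(i : ℕ) + 1`. The distribution `Q` assigns
`1/M + 1/M²` to odd outcomes and `1/M − 1/M²` to even outcomes; `U` is uniform. Then
`‖Q − U‖₁ = 1/M`, and every decision rule on `N` i.i.d. samples succeeds with probability
at most `1/2 + N/(4M)`. -/
theorem indistinguishable_example
    {M N : ℕ} (hM : 2 ≤ M) (hMe : Even M) (hN : 0 < N) :
    (∑ i : Fin M,
        |(if Odd ((i : ℕ) + 1) then 1 / (M:ℝ) + 1 / (M:ℝ) ^ 2
          else 1 / (M:ℝ) - 1 / (M:ℝ) ^ 2) - 1 / (M:ℝ)| = 1 / (M:ℝ))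
    ∧ ∀ T : (Fin N → Fin M) → Bool,
        (1/2) * ∑ s ∈ univ.filter (fun s : Fin N → Fin M => T s = false),
            ∏ j, (if Odd ((s j : ℕ) + 1) then 1 / (M:ℝ) + 1 / (M:ℝ) ^ 2
                  else 1 / (M:ℝ) - 1 / (M:ℝ) ^ 2)
          + (1/2) * ∑ s ∈ univ.filter (fun s : Fin N → Fin M => T s = true),
            ∏ _j : Fin N, (1 / (M:ℝ))
          ≤ 1/2 + N / (4 * M) := by
  have hM2 : (2:ℝ) ≤ (M:ℝ) := by exact_mod_cast hM
  have hM0 : (0:ℝ) < (M:ℝ) := by linarith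
  have hMne : (M:ℝ) ≠ 0 := ne_of_gt hM0
  set c : ℝ := 1 / (M:ℝ) ^ 2 with hc
  have hc0 : 0 ≤ c := by positivity
  have hcle : c ≤ 1 / (M:ℝ) := by
    rw [hc, div_le_div_iff₀ (by positivity) hM0]; nlinarith
  set f : ℕ → ℝ := fun i => if Odd (i + 1) then 1/(M:ℝ) + c else 1/(M:ℝ) - c with hf
  -- part 1
  have habs : ∀ i : ℕ, |f i - 1/(M:ℝ)| = c := by
    intro i
    by_cases h : Odd (i + 1)
    · rw [hf]; simp only [if_pos h]
      rw [show 1/(M:ℝ) + c - 1/(M:ℝ) = c by ring, abs_of_nonneg hc0]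
    · rw [hf]; simp only [if_neg h]
      rw [show 1/(M:ℝ) - c - 1/(M:ℝ) = -c by ring, abs_neg, abs_of_nonneg hc0]
  have part1 : ∑ i : Fin M, |f (i : ℕ) - 1/(M:ℝ)| = 1/(M:ℝ) := by
    rw [Fin.sum_univ_eq_sum_range (fun i => |f i - 1/(M:ℝ)|) M]
    rw [Finset.sum_congr rfl fun i _ => habs i, Finset.sum_const, Finset.card_range,
      nsmul_eq_mul, hc]
    field_simp
  refine ⟨part1, ?_⟩
  -- sum of f over Fin M is 1
  have hgsum : ∀ k : ℕ, ∑ i ∈ Finset.range (2*k), (if Odd (i+1) then c else -c) = 0 := by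
    intro k
    induction k with
    | zero => simp
    | succ k ih =>
      rw [show 2*(k+1) = (2*k)+1+1 by ring, Finset.sum_range_succ, Finset.sum_range_succ, ih]
      have h1 : Odd (2*k+1) := odd_two_mul_add_one k
      have h2 : ¬ Odd (2*k+1+1) := by
        rw [Nat.odd_iff]; omega
      rw [if_pos h1, if_neg h2]; ring
  have hqsum : ∑ i : Fin M, f (i : ℕ) = 1 := by
    rw [Fin.sum_univ_eq_sum_range f M]
    have : ∀ i, f i = 1/(M:ℝ) + (if Odd (i+1) then c else -c) := by
      intro i; by_cases h : Odd (i+1) <;> simp [hf, h] <;> ring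
    rw [Finset.sum_congr rfl fun i _ => this i, Finset.sum_add_distrib, Finset.sum_const,
      Finset.card_range, nsmul_eq_mul]
    obtain ⟨k, hk⟩ := hMe
    rw [show M = 2*k by omega, hgsum k]
    have hk0 : (0:ℝ) < (k:ℝ) := by
      have : 1 ≤ k := by omega
      exact_mod_cast Nat.lt_of_lt_of_le Nat.zero_lt_one this
    push_cast
    rw [add_zero, mul_one_div, div_self (by positivity)]
  have hq0 : ∀ i : Fin M, 0 ≤ f (i : ℕ) := by
    intro i; by_cases h : Odd ((i:ℕ)+1)
    · rw [hf]; simp only [if_pos h]; positivity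
    · rw [hf]; simp only [if_neg h]; linarith
  have hu0 : ∀ _i : Fin M, (0:ℝ) ≤ 1/(M:ℝ) := fun _ => by positivity
  have husum : ∑ _i : Fin M, (1/(M:ℝ)) = 1 := by
    rw [Finset.sum_const, Finset.card_univ, Fintype.card_fin, nsmul_eq_mul]
    field_simp
  have hl1 := l1_prod_le_s14 (q := fun i : Fin M => f (i:ℕ)) (u := fun _ => 1/(M:ℝ))
    hq0 hu0 hqsum husum N
  rw [part1] at hl1
  -- now the decision rule bound
  intro T
  set P : (Fin N → Fin M) → ℝ := fun s => ∏ j, f ((s j : ℕ)) with hP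
  set U : (Fin N → Fin M) → ℝ := fun _s => ∏ _j : Fin N, (1/(M:ℝ)) with hU
  have hPsum : ∑ s : Fin N → Fin M, P s = 1 := sum_prod_one hqsum N
  have hUsum : ∑ s : Fin N → Fin M, U s = 1 := sum_prod_one husum N
  have hDsum : ∑ s : Fin N → Fin M, |P s - U s| ≤ N * (1/(M:ℝ)) := hl1
  set mx : (Fin N → Fin M) → ℝ := fun s => (P s + U s + |P s - U s|) / 2 with hmx
  have hmxsum : ∑ s : Fin N → Fin M, mx s ≤ 1 + N * (1/(M:ℝ)) / 2 := by
    rw [hmx]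
    simp only [← Finset.sum_div, Finset.sum_add_distrib, hPsum, hUsum]
    linarith
  have hsplit : ∑ s ∈ univ.filter (fun s : Fin N → Fin M => T s = false), mx s
      + ∑ s ∈ univ.filter (fun s : Fin N → Fin M => T s = true), mx s
      = ∑ s : Fin N → Fin M, mx s := by
    rw [← Finset.sum_filter_add_sum_filter_not univ (fun s : Fin N → Fin M => T s = false) mx]
    congr 1
    apply Finset.sum_congr _ (fun _ _ => rfl)
    apply Finset.filter_congr
    intro s _
    simp
  have hAle : ∑ s ∈ univ.filter (fun s : Fin N → Fin M => T s = false), P s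
      ≤ ∑ s ∈ univ.filter (fun s : Fin N → Fin M => T s = false), mx s := by
    apply Finset.sum_le_sum
    intro s _
    have := le_abs_self (P s - U s)
    rw [hmx]; dsimp only; linarith
  have hBle : ∑ s ∈ univ.filter (fun s : Fin N → Fin M => T s = true), U s
      ≤ ∑ s ∈ univ.filter (fun s : Fin N → Fin M => T s = true), mx s := by
    apply Finset.sum_le_sum
    intro s _
    have := neg_abs_le (P s - U s)
    rw [hmx]; dsimp only; linarith
  have key : ∑ s ∈ univ.filter (fun s : Fin N → Fin M => T s = false), P s
      + ∑ s ∈ univ.filter (fun s : Fin N → Fin M => T s = true), U s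
      ≤ 1 + N * (1/(M:ℝ)) / 2 := by linarith
  have hfin : (N:ℝ) * (1/(M:ℝ)) / 2 / 2 = N / (4 * M) := by
    rw [mul_one_div, div_div, div_div, show (M:ℝ)*(2*2) = 4*M by ring]
  calc (1/2) * ∑ s ∈ univ.filter (fun s : Fin N → Fin M => T s = false), P s
        + (1/2) * ∑ s ∈ univ.filter (fun s : Fin N → Fin M => T s = true), U s
      ≤ (1/2) * (1 + N * (1/(M:ℝ)) / 2) := by linarith
    _ = 1/2 + N / (4 * M) := by rw [mul_add, mul_one_div, ← hfin]; ring
end
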